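/- arXiv:2409.12484 — 4 statements merged into one kernel-verified Lean document; each statement's English description precedes it below -/
import Mathlib

section
/- Baer trick: Let G be a finite group of odd order with [G,G] ≤ Z(G), and let k be a natural number such that x^(2k) = x for all x in G (such k exists since squaring is bijective on a group of odd exponent dividing |G|). Define x*y := x·y·[y,x]^k where [y,x] = y⁻¹x⁻¹yx. Then (G,*) is an abelian group. -/
/-!
When commutators are central they are bimultiplicative, so the correction term `⁅y, x⁆ ^ k` of
`x ∘ y = x y ⁅y, x⁆ ^ k` is central and both bracketings of `x ∘ y ∘ z` equal
`x y z (⁅y, x⁆ ⁅z, x⁆ ⁅z, y⁆) ^ k`. Commutativity is where `k` enters: `x y = y x ⁅x, y⁆` and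
`⁅x, y⁆ = ⁅x, y⁆ ^ (2k)`, so `x y ⁅x, y⁆⁻ᵏ = y x ⁅x, y⁆ ^ k`.

Mathlib's `⁅y, x⁆` is `y x y⁻¹ x⁻¹`; in a group of class two it coincides with `y⁻¹ x⁻¹ y x`.
-/

open scoped commutatorElement

section

variable {G : Type*} [Group G]

theorem commutatorElement_eq_one_of_mem_center_right {c : G} (hc : c ∈ Subgroup.center G)
    (a : G) : ⁅a, c⁆ = 1 :=
  commutatorElement_eq_one_iff_mul_comm.mpr (Subgroup.mem_center_iff.mp hc a)

theorem commutatorElement_eq_one_of_mem_center_left {c : G} (hc : c ∈ Subgroup.center G)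
    (a : G) : ⁅c, a⁆ = 1 := by
  rw [← commutatorElement_inv, commutatorElement_eq_one_of_mem_center_right hc, inv_one]

theorem commutatorElement_mem_center (hG : commutator G ≤ Subgroup.center G) (a b : G) :
    ⁅a, b⁆ ∈ Subgroup.center G :=
  hG (commutator_eq_closure G ▸ Subgroup.subset_closure (commutator_mem_commutatorSet a b))

theorem commute_commutatorElement (hG : commutator G ≤ Subgroup.center G) (a b g : G) :
    Commute ⁅a, b⁆ g :=
  (Subgroup.mem_center_iff.mp (commutatorElement_mem_center hG a b) g).symm

theorem commutatorElement_mul_left_of_le_center (hG : commutator G ≤ Subgroup.center G)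
    (a b c : G) : ⁅a * b, c⁆ = ⁅a, c⁆ * ⁅b, c⁆ := by
  rw [commutatorElement_mul_left_eq_conj_mul,
    (commute_commutatorElement hG b c a).symm.mul_inv_cancel,
    (commute_commutatorElement hG b c _).eq]

theorem commutatorElement_mul_right_of_le_center (hG : commutator G ≤ Subgroup.center G)
    (a b c : G) : ⁅a, b * c⁆ = ⁅a, b⁆ * ⁅a, c⁆ := by
  rw [commutatorElement_mul_right_eq_mul_conj, mul_assoc, mul_assoc,
    (commute_commutatorElement hG a c b).symm.mul_inv_cancel_assoc]

theorem commutatorElement_inv_inv_of_le_center (hG : commutator G ≤ Subgroup.center G)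
    (a b : G) : ⁅a⁻¹, b⁻¹⁆ = ⁅a, b⁆ :=
  calc ⁅a⁻¹, b⁻¹⁆ = (a * b)⁻¹ * ⁅a, b⁆ * (a * b) := by simp only [commutatorElement_def]; group
    _ = ⁅a, b⁆ := (commute_commutatorElement hG a b _).symm.inv_mul_cancel

def baerMul (k : ℕ) (x y : G) : G := x * y * ⁅y, x⁆ ^ k

@[simp] theorem baerMul_one (k : ℕ) (x : G) : baerMul k x 1 = x := by
  simp [baerMul]

@[simp] theorem one_baerMul (k : ℕ) (x : G) : baerMul k 1 x = x := by
  simp [baerMul]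

theorem baerMul_inv_self (k : ℕ) (x : G) : baerMul k x x⁻¹ = 1 := by
  simp [baerMul, commutatorElement_def]

theorem inv_baerMul_self (k : ℕ) (x : G) : baerMul k x⁻¹ x = 1 := by
  simp [baerMul, commutatorElement_def]

theorem baerMul_comm (k : ℕ) {x y : G} (hc : ⁅x, y⁆ ∈ Subgroup.center G)
    (hk : ⁅x, y⁆ ^ (2 * k) = ⁅x, y⁆) : baerMul k x y = baerMul k y x := by
  have hxy : x * y = y * x * ⁅x, y⁆ := by
    rw [Subgroup.mem_center_iff.mp hc]; simp only [commutatorElement_def]; group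
  calc baerMul k x y = y * x * (⁅x, y⁆ ^ (2 * k) * (⁅x, y⁆ ^ k)⁻¹) := by
        rw [baerMul, hxy, hk, ← commutatorElement_inv x y, inv_pow, mul_assoc]
    _ = baerMul k y x := by rw [two_mul, pow_add, mul_inv_cancel_right, baerMul]

theorem baerMul_assoc (hG : commutator G ≤ Subgroup.center G) (k : ℕ) (x y z : G) :
    baerMul k (baerMul k x y) z = baerMul k x (baerMul k y z) := by
  have hc := commute_commutatorElement hG
  have hz : ⁅z, x * y * ⁅y, x⁆ ^ k⁆ = ⁅z, x⁆ * ⁅z, y⁆ := by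
    rw [commutatorElement_mul_right_of_le_center hG, commutatorElement_mul_right_of_le_center hG,
      commutatorElement_eq_one_of_mem_center_right
        (pow_mem (commutatorElement_mem_center hG y x) k), mul_one]
  have hx : ⁅y * z * ⁅z, y⁆ ^ k, x⁆ = ⁅y, x⁆ * ⁅z, x⁆ := by
    rw [commutatorElement_mul_left_of_le_center hG, commutatorElement_mul_left_of_le_center hG,
      commutatorElement_eq_one_of_mem_center_left
        (pow_mem (commutatorElement_mem_center hG z y) k), mul_one]
  simp only [baerMul]
  rw [hz, hx, (hc z x _).mul_pow, (hc y x _).mul_pow]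
  simp only [mul_assoc]
  rw [((hc y x z).pow_left k).left_comm, ((hc z y _).pow_left k).left_comm,
    ((hc z y _).pow_left k).eq]

end

theorem baer_trick_general (G : Type*) [Group G]
    (hnil : commutator G ≤ Subgroup.center G)
    (k : ℕ) (hk : ∀ x : G, x ^ (2 * k) = x)
    (star : G → G → G)
    (hstar : ∀ x y : G, star x y = x * y * (y⁻¹ * x⁻¹ * y * x) ^ k) :
    (∀ x y z : G, star (star x y) z = star x (star y z)) ∧
    (∀ x y : G, star x y = star y x) ∧
    (∀ x : G, star x 1 = x ∧ star 1 x = x) ∧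
    (∀ x : G, ∃ y : G, star x y = 1 ∧ star y x = 1) := by
  obtain rfl : star = baerMul k := by
    funext x y
    rw [hstar, baerMul, ← commutatorElement_inv_inv_of_le_center hnil, commutatorElement_def,
      inv_inv, inv_inv]
  exact ⟨baerMul_assoc hnil k,
    fun x y => baerMul_comm k (commutatorElement_mem_center hnil x y) (hk _),
    fun x => ⟨baerMul_one k x, one_baerMul k x⟩,
    fun x => ⟨x⁻¹, baerMul_inv_self k x, inv_baerMul_self k x⟩⟩

/-- Baer trick: if `G` is a finite group of odd order with `[G,G] ≤ Z(G)` and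
`x^(2k) = x` for all `x`, then `x*y := x·y·[y,x]^k` (with `[y,x] = y⁻¹x⁻¹yx`)
makes `G` an abelian group. -/
theorem baer_trick (G : Type*) [Group G] [Finite G]
    (hodd : Odd (Nat.card G))
    (hnil : commutator G ≤ Subgroup.center G)
    (k : ℕ) (hk : ∀ x : G, x ^ (2 * k) = x)
    (star : G → G → G)
    (hstar : ∀ x y : G, star x y = x * y * (y⁻¹ * x⁻¹ * y * x) ^ k) :
    (∀ x y z : G, star (star x y) z = star x (star y z)) ∧
    (∀ x y : G, star x y = star y x) ∧
    (∀ x : G, star x 1 = x ∧ star 1 x = x) ∧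
    (∀ x : G, ∃ y : G, star x y = 1 ∧ star y x = 1) :=
  baer_trick_general G hnil k hk star hstar
end

section
/- Let G be a group with [G,G] ≤ Z(G), let c be an integer, and define x*y := x·y·[x,y]^c. Then * is associative and (G,*) with identity 1 and inverse x⁻¹·[x,x⁻¹]^(-c) (equivalently, the *-inverse of x) is a group. -/
/-!
Write `[x, y] = x⁻¹y⁻¹xy`. Since commutators are central, `[·, ·]` is bilinear and vanishes as soon
as one argument is central. Hence `[x * y, z] = [x, z][y, z]` and `[x, y * z] = [x, y][x, z]`, where
`*` is the twisted product, and both bracketings of `x * y * z` expand to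
`xyz · ([x, y][x, z][y, z])^c`. Since `[x, 1] = [1, x] = [x, x⁻¹] = [x⁻¹, x] = 1`, the identity and
the inverses of `G` serve for `*` as well.
-/

namespace TwoNilpotent

variable {G : Type*} [Group G]

/-- The commutator in the convention `[x, y] = x⁻¹y⁻¹xy`, opposite to Mathlib's `⁅x, y⁆`. -/
def bracket (x y : G) : G := x⁻¹ * y⁻¹ * x * y

def starMul (c : ℤ) (x y : G) : G := x * y * bracket x y ^ c

@[simp]
theorem bracket_one_right (x : G) : bracket x 1 = 1 := by
  simp [bracket]

@[simp]
theorem bracket_one_left (x : G) : bracket 1 x = 1 := by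
  simp [bracket]

@[simp]
theorem bracket_inv_right (x : G) : bracket x x⁻¹ = 1 := by
  simp [bracket]

@[simp]
theorem bracket_inv_left (x : G) : bracket x⁻¹ x = 1 := by
  simp [bracket]

theorem bracket_eq_one_of_mem_center_left {w : G} (hw : w ∈ Subgroup.center G) (z : G) :
    bracket w z = 1 := by
  rw [bracket, mul_assoc w⁻¹, Subgroup.mem_center_iff.mp hw z⁻¹]
  group

theorem bracket_eq_one_of_mem_center_right (x : G) {w : G} (hw : w ∈ Subgroup.center G) :
    bracket x w = 1 := by
  rw [bracket, Subgroup.mem_center_iff.mp (Subgroup.inv_mem _ hw) x⁻¹]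
  group

theorem bracket_mem_center (hnil : commutator G ≤ Subgroup.center G) (x y : G) :
    bracket x y ∈ Subgroup.center G := by
  apply hnil
  simpa [commutator_def, bracket, commutatorElement_def, mul_assoc] using
    Subgroup.commutator_mem_commutator (Subgroup.mem_top x⁻¹) (Subgroup.mem_top y⁻¹)

theorem commute_bracket (hnil : commutator G ≤ Subgroup.center G) (x y g : G) :
    Commute (bracket x y) g :=
  (Subgroup.mem_center_iff.mp (bracket_mem_center hnil x y) g).symm

theorem bracket_mul_left (hnil : commutator G ≤ Subgroup.center G) (a b z : G) :
    bracket (a * b) z = bracket a z * bracket b z :=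
  calc bracket (a * b) z = b⁻¹ * bracket a z * (z⁻¹ * b * z) := by simp only [bracket]; group
    _ = bracket a z * bracket b z := by
      rw [← (commute_bracket hnil a z b⁻¹).eq]; simp only [bracket]; group

theorem bracket_mul_right (hnil : commutator G ≤ Subgroup.center G) (a b z : G) :
    bracket a (b * z) = bracket a b * bracket a z :=
  calc bracket a (b * z) = a⁻¹ * z⁻¹ * a * bracket a b * z := by simp only [bracket]; group
    _ = bracket a b * bracket a z := by
      rw [← (commute_bracket hnil a b (a⁻¹ * z⁻¹ * a)).eq]; simp only [bracket]; group

theorem bracket_starMul_left (hnil : commutator G ≤ Subgroup.center G) (c : ℤ) (x y z : G) :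
    bracket (starMul c x y) z = bracket x z * bracket y z := by
  rw [starMul, bracket_mul_left hnil, bracket_mul_left hnil,
    bracket_eq_one_of_mem_center_left (Subgroup.zpow_mem _ (bracket_mem_center hnil x y) c),
    mul_one]

theorem bracket_starMul_right (hnil : commutator G ≤ Subgroup.center G) (c : ℤ) (x y z : G) :
    bracket x (starMul c y z) = bracket x y * bracket x z := by
  rw [starMul, bracket_mul_right hnil, bracket_mul_right hnil,
    bracket_eq_one_of_mem_center_right x (Subgroup.zpow_mem _ (bracket_mem_center hnil y z) c),
    mul_one]

theorem starMul_assoc (hnil : commutator G ≤ Subgroup.center G) (c : ℤ) (x y z : G) :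
    starMul c (starMul c x y) z = starMul c x (starMul c y z) := by
  have central (a b : G) (g : G) : Commute (bracket a b ^ c) g :=
    (commute_bracket hnil a b g).zpow_left c
  rw [starMul.eq_1 c (starMul c x y), starMul.eq_1 c x (starMul c y z),
    bracket_starMul_left hnil, bracket_starMul_right hnil, (commute_bracket hnil x z _).mul_zpow,
    (commute_bracket hnil x y _).mul_zpow]
  simp only [starMul]
  calc x * y * bracket x y ^ c * z * (bracket x z ^ c * bracket y z ^ c)
      = x * y * z * (bracket x y ^ c * bracket x z ^ c * bracket y z ^ c) := by
        rw [mul_assoc _ (bracket x y ^ c), (central x y z).eq]; group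
    _ = x * y * z * (bracket y z ^ c * (bracket x y ^ c * bracket x z ^ c)) := by
      rw [(central y z _).eq]
    _ = x * (y * z * bracket y z ^ c) * (bracket x y ^ c * bracket x z ^ c) := by group

theorem starMul_one (c : ℤ) (x : G) : starMul c x 1 = x := by
  simp [starMul]

theorem one_starMul (c : ℤ) (x : G) : starMul c 1 x = x := by
  simp [starMul]

theorem starMul_inv (c : ℤ) (x : G) : starMul c x x⁻¹ = 1 := by
  simp [starMul]

theorem inv_starMul (c : ℤ) (x : G) : starMul c x⁻¹ x = 1 := by
  simp [starMul]

end TwoNilpotent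

open TwoNilpotent in
/-- In a group with `[G,G] ≤ Z(G)`, for any integer `c` the operation
`x*y := x·y·[x,y]^c` is associative, has identity `1`, and every element has a
two-sided inverse `x⁻¹·[x,x⁻¹]^(-c)`; hence `(G,*)` is a group. -/
theorem star_group_two_nilpotent (G : Type*) [Group G]
    (hnil : commutator G ≤ Subgroup.center G)
    (c : ℤ) (br : G → G → G) (hbr : ∀ x y : G, br x y = x⁻¹ * y⁻¹ * x * y)
    (star : G → G → G)
    (hstar : ∀ x y : G, star x y = x * y * (br x y) ^ c) :
    (∀ x y z : G, star (star x y) z = star x (star y z)) ∧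
    (∀ x : G, star x 1 = x ∧ star 1 x = x) ∧
    (∀ x : G, star x (x⁻¹ * (br x x⁻¹) ^ (-c)) = 1 ∧
      star (x⁻¹ * (br x x⁻¹) ^ (-c)) x = 1) := by
  obtain rfl : br = bracket := funext fun x => funext (hbr x)
  obtain rfl : star = starMul c := funext fun x => funext (hstar x)
  simp only [bracket_inv_right, one_zpow, mul_one]
  exact ⟨starMul_assoc hnil c, fun x => ⟨starMul_one c x, one_starMul c x⟩,
    fun x => ⟨starMul_inv c x, inv_starMul c x⟩⟩
end

section
/- Let G be a group with [G,G] ≤ Z(G), let c be an integer, and define x*y := x·y·[x,y]^c. Then (G,*) is commutative if and only if [x,y]^(2c+1) = 1 for all x,y ∈ G. -/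
theorem zpow_add_one_eq_zpow_neg_iff {G : Type*} [Group G] (a : G) (n : ℤ) :
    a ^ (n + 1) = a ^ (-n) ↔ a ^ (2 * n + 1) = 1 := by
  rw [← mul_inv_eq_one, ← zpow_sub, show n + 1 - -n = 2 * n + 1 by ring]

theorem mul_mul_commutator_zpow_comm_iff {G : Type*} [Group G] (x y : G) (c : ℤ) :
    x * y * (x⁻¹ * y⁻¹ * x * y) ^ c = y * x * (y⁻¹ * x⁻¹ * y * x) ^ c ↔
      (x⁻¹ * y⁻¹ * x * y) ^ (2 * c + 1) = 1 := by
  have hxy : x * y = y * x * (x⁻¹ * y⁻¹ * x * y) := by group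
  have hyx : y⁻¹ * x⁻¹ * y * x = (x⁻¹ * y⁻¹ * x * y)⁻¹ := by group
  rw [hxy, hyx, mul_assoc, ← zpow_one_add, inv_zpow', mul_right_inj, add_comm]
  exact zpow_add_one_eq_zpow_neg_iff _ c

theorem star_commutative_iff_general (G : Type*) [Group G]
    (c : ℤ) (br : G → G → G) (hbr : ∀ x y : G, br x y = x⁻¹ * y⁻¹ * x * y)
    (star : G → G → G)
    (hstar : ∀ x y : G, star x y = x * y * (br x y) ^ c) :
    (∀ x y : G, star x y = star y x) ↔ (∀ x y : G, (br x y) ^ (2 * c + 1) = 1) := by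
  simp_rw [hstar, hbr]
  exact forall₂_congr fun x y => mul_mul_commutator_zpow_comm_iff x y c

/-- In a group with `[G,G] ≤ Z(G)`, the operation `x*y := x·y·[x,y]^c` is
commutative iff `[x,y]^(2c+1) = 1` for all `x,y`. -/
theorem star_commutative_iff (G : Type*) [Group G]
    (hnil : commutator G ≤ Subgroup.center G)
    (c : ℤ) (br : G → G → G) (hbr : ∀ x y : G, br x y = x⁻¹ * y⁻¹ * x * y)
    (star : G → G → G)
    (hstar : ∀ x y : G, star x y = x * y * (br x y) ^ c) :
    (∀ x y : G, star x y = star y x) ↔ (∀ x y : G, (br x y) ^ (2 * c + 1) = 1) :=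
  star_commutative_iff_general G c br hbr star hstar
end

section
/- Let G be a group with [G,G] ≤ Z(G), let c12, c13, c23 be integers, and define m : G³ → G by m(x,y,z) := x·y⁻¹·z·[x,y]^{c12}·[x,z]^{c13}·[y,z]^{c23}. If m satisfies the Mal'cev identities m(x,y,y) = x and m(y,y,x) = x for all x,y ∈ G, then [x,y]^{c12+c13} = 1 and [x,y]^{c13+c23} = 1 for all x,y ∈ G. -/
/-- In a group with `[G,G] ≤ Z(G)`, if
`m(x,y,z) := x·y⁻¹·z·[x,y]^c12·[x,z]^c13·[y,z]^c23` satisfies the Mal'cev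
identities, then `[x,y]^(c12+c13) = 1` and `[x,y]^(c13+c23) = 1` for all `x,y`. -/
theorem malcev_coefficients (G : Type*) [Group G]
    (hnil : commutator G ≤ Subgroup.center G)
    (c12 c13 c23 : ℤ)
    (br : G → G → G) (hbr : ∀ x y : G, br x y = x⁻¹ * y⁻¹ * x * y)
    (m : G → G → G → G)
    (hm : ∀ x y z : G, m x y z =
      x * y⁻¹ * z * (br x y) ^ c12 * (br x z) ^ c13 * (br y z) ^ c23)
    (hmal1 : ∀ x y : G, m x y y = x) (hmal2 : ∀ x y : G, m y y x = x) :
    ∀ x y : G, (br x y) ^ (c12 + c13) = 1 ∧ (br x y) ^ (c13 + c23) = 1 := by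
  intro x y
  have hself : ∀ z : G, br z z = 1 := by intro z; rw [hbr]; group
  constructor
  · have h1 := hmal1 x y
    rw [hm, hself, one_zpow, mul_one] at h1
    have : x * (br x y) ^ (c12 + c13) = x := by
      rw [zpow_add]
      calc x * ((br x y) ^ c12 * (br x y) ^ c13)
          = x * y⁻¹ * y * (br x y) ^ c12 * (br x y) ^ c13 := by group
        _ = x := h1
    exact mul_left_cancel (by rw [this, mul_one] : x * (br x y) ^ (c12 + c13) = x * 1)
  · have h2 := hmal2 y x
    rw [hm, hself, one_zpow] at h2
    have : y * (br x y) ^ (c13 + c23) = y := by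
      rw [zpow_add]
      calc y * ((br x y) ^ c13 * (br x y) ^ c23)
          = x * x⁻¹ * y * 1 * (br x y) ^ c13 * (br x y) ^ c23 := by group
        _ = y := h2
    exact mul_left_cancel (by rw [this, mul_one] : y * (br x y) ^ (c13 + c23) = y * 1)
end
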